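/- arXiv:1811.01354 — 2 statements merged into one kernel-verified Lean document; each statement's English description precedes it below -/
import Mathlib

section
/- For every probability mass function Q on 𝒳, E₀(−1,Q) + C(supp(Q)) ≤ 0. -/
open scoped BigOperators
open Filter Topology

/-- `f` is a probability mass function on a finite alphabet. -/
def IsPMF {α : Type*} [Fintype α] (f : α → ℝ) : Prop :=
  (∀ a, 0 ≤ f a) ∧ ∑ a, f a = 1

/-- `P` is a discrete memoryless channel from `𝓧` to `𝓨`. -/
def IsChannel {𝓧 𝓨 : Type*} [Fintype 𝓧] [Fintype 𝓨] (P : 𝓧 → 𝓨 → ℝ) : Prop :=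
  ∀ x, IsPMF (P x)

/-- `V` is a conditional pmf on `𝓧` given `𝓨`. -/
def IsCondPMF {𝓧 𝓨 : Type*} [Fintype 𝓧] [Fintype 𝓨] (V : 𝓨 → 𝓧 → ℝ) : Prop :=
  ∀ y, IsPMF (V y)

/-- one term `s·log(s/t)` of a KL divergence, with the conventions
    `0·log(0/t) = 0` and `s·log(s/0) = +∞` for `s > 0`. -/
noncomputable def klTerm (s t : ℝ) : EReal :=
  if s = 0 then 0 else if t = 0 then ⊤ else ((s * Real.log (s / t) : ℝ) : EReal)

/-- `D(T∘V ‖ Q∘P)`. -/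
noncomputable def DQP {𝓧 𝓨 : Type*} [Fintype 𝓧] [Fintype 𝓨]
    (T : 𝓨 → ℝ) (V : 𝓨 → 𝓧 → ℝ) (Q : 𝓧 → ℝ) (P : 𝓧 → 𝓨 → ℝ) : EReal :=
  ∑ y, ∑ x, klTerm (T y * V y x) (Q x * P x y)

/-- `D(T∘V ‖ T×Q)`. -/
noncomputable def DTQ {𝓧 𝓨 : Type*} [Fintype 𝓧] [Fintype 𝓨]
    (T : 𝓨 → ℝ) (V : 𝓨 → 𝓧 → ℝ) (Q : 𝓧 → ℝ) : EReal :=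
  ∑ y, ∑ x, klTerm (T y * V y x) (T y * Q x)

/-- Gallager's function `E₀(ρ,Q)` (for `ρ > −1`). -/
noncomputable def E0 {𝓧 𝓨 : Type*} [Fintype 𝓧] [Fintype 𝓨]
    (ρ : ℝ) (Q : 𝓧 → ℝ) (P : 𝓧 → 𝓨 → ℝ) : ℝ :=
  - Real.log (∑ y, (∑ x, Q x * P x y ^ (1 / (1 + ρ))) ^ (1 + ρ))

/-- The joint distribution `T_ρ∘V_ρ` on `𝓧 × 𝓨` (for `ρ > −1`). -/
noncomputable def Jrho {𝓧 𝓨 : Type*} [Fintype 𝓧] [Fintype 𝓨]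
    (ρ : ℝ) (Q : 𝓧 → ℝ) (P : 𝓧 → 𝓨 → ℝ) (x : 𝓧) (y : 𝓨) : ℝ :=
  Q x * P x y ^ (1 / (1 + ρ)) * (∑ a, Q a * P a y ^ (1 / (1 + ρ))) ^ ρ /
    ∑ y', (∑ a, Q a * P a y' ^ (1 / (1 + ρ))) ^ (1 + ρ)

/-- `max_{x : Q(x) > 0} P(y|x)`. -/
noncomputable def maxP {𝓧 𝓨 : Type*} (Q : 𝓧 → ℝ) (P : 𝓧 → 𝓨 → ℝ) (y : 𝓨) : ℝ :=
  ⨆ x : {x // 0 < Q x}, P x.1 y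

/-- `E₀(−1,Q) = −log ∑_y max_{x : Q(x)>0} P(y|x)`. -/
noncomputable def E0m1 {𝓧 𝓨 : Type*} [Fintype 𝓧] [Fintype 𝓨]
    (Q : 𝓧 → ℝ) (P : 𝓧 → 𝓨 → ℝ) : ℝ :=
  - Real.log (∑ y, maxP Q P y)

/-- `E₀(ρ,Q)` extended to `ρ = −1`. -/
noncomputable def E0full {𝓧 𝓨 : Type*} [Fintype 𝓧] [Fintype 𝓨]
    (ρ : ℝ) (Q : 𝓧 → ℝ) (P : 𝓧 → 𝓨 → ℝ) : ℝ :=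
  if ρ = -1 then E0m1 Q P else E0 ρ Q P

/-- `T_{−1}(y) ∝ max_{a : Q(a)>0} P(y|a)`. -/
noncomputable def Tm1 {𝓧 𝓨 : Type*} [Fintype 𝓧] [Fintype 𝓨]
    (Q : 𝓧 → ℝ) (P : 𝓧 → 𝓨 → ℝ) (y : 𝓨) : ℝ :=
  maxP Q P y / ∑ y', maxP Q P y'

/-- `V` is admissible at `ρ = −1`: `V(x|y) = 0` for every `x` outside
    `argmax_{a : Q(a)>0} P(y|a)`. -/
def AdmissibleAtM1 {𝓧 𝓨 : Type*} [Fintype 𝓧] [Fintype 𝓨]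
    (Q : 𝓧 → ℝ) (P : 𝓧 → 𝓨 → ℝ) (V : 𝓨 → 𝓧 → ℝ) : Prop :=
  ∀ y x, ¬ (0 < Q x ∧ ∀ a, 0 < Q a → P a y ≤ P x y) → V y x = 0

/-- the error exponent `E_e(R,Q)`. -/
noncomputable def Ee {𝓧 𝓨 : Type*} [Fintype 𝓧] [Fintype 𝓨]
    (R : ℝ) (Q : 𝓧 → ℝ) (P : 𝓧 → 𝓨 → ℝ) : EReal :=
  sInf {v | ∃ T : 𝓨 → ℝ, ∃ V : 𝓨 → 𝓧 → ℝ, IsPMF T ∧ IsCondPMF V ∧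
    v = DQP T V Q P + max (DTQ T V Q - (R : EReal)) 0}

/-- the ML correct-decoding exponent `E_c^{ML}(R,Q)`. -/
noncomputable def EcML {𝓧 𝓨 : Type*} [Fintype 𝓧] [Fintype 𝓨]
    (R : ℝ) (Q : 𝓧 → ℝ) (P : 𝓧 → 𝓨 → ℝ) : EReal :=
  sInf {v | ∃ T : 𝓨 → ℝ, ∃ V : 𝓨 → 𝓧 → ℝ, IsPMF T ∧ IsCondPMF V ∧
    v = DQP T V Q P + max ((R : EReal) - DTQ T V Q) 0}

/-- the strict correct-decoding exponent `E_c(R,Q)` (`+∞` if infeasible). -/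
noncomputable def Ec {𝓧 𝓨 : Type*} [Fintype 𝓧] [Fintype 𝓨]
    (R : ℝ) (Q : 𝓧 → ℝ) (P : 𝓧 → 𝓨 → ℝ) : EReal :=
  sInf {v | ∃ T : 𝓨 → ℝ, ∃ V : 𝓨 → 𝓧 → ℝ, IsPMF T ∧ IsCondPMF V ∧
    (R : EReal) ≤ DTQ T V Q ∧ v = DQP T V Q P}

/-- the mutual information `I(Q∘P)`. -/
noncomputable def MI {𝓧 𝓨 : Type*} [Fintype 𝓧] [Fintype 𝓨]
    (Q : 𝓧 → ℝ) (P : 𝓧 → 𝓨 → ℝ) : ℝ :=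
  ∑ x, ∑ y, if Q x * P x y = 0 then 0
    else Q x * P x y * Real.log (P x y / ∑ a, Q a * P a y)

/-- the capacity `C(Z)` of the channel restricted to input letters in `Z`. -/
noncomputable def capacity {𝓧 𝓨 : Type*} [Fintype 𝓧] [Fintype 𝓨]
    (P : 𝓧 → 𝓨 → ℝ) (Z : Set 𝓧) : ℝ :=
  sSup {c | ∃ Q' : 𝓧 → ℝ, IsPMF Q' ∧ (∀ x, 0 < Q' x → x ∈ Z) ∧ c = MI Q' P}

/-- `R_{−1}^{−}(Q)`. -/
noncomputable def Rm1minus {𝓧 𝓨 : Type*} [Fintype 𝓧] [Fintype 𝓨]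
    (Q : 𝓧 → ℝ) (P : 𝓧 → 𝓨 → ℝ) : EReal :=
  sInf {v | ∃ V : 𝓨 → 𝓧 → ℝ, IsCondPMF V ∧ AdmissibleAtM1 Q P V ∧
    v = DTQ (Tm1 Q P) V Q}

/-- `R_{−1}^{+}(Q)`. -/
noncomputable def Rm1plus {𝓧 𝓨 : Type*} [Fintype 𝓧] [Fintype 𝓨]
    (Q : 𝓧 → ℝ) (P : 𝓧 → 𝓨 → ℝ) : EReal :=
  sSup {v | ∃ V : 𝓨 → 𝓧 → ℝ, IsCondPMF V ∧ AdmissibleAtM1 Q P V ∧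
    v = DTQ (Tm1 Q P) V Q}

/-- `F_ρ(T∘V, Q) = D(T∘V‖Q∘P) + ρ·D(T∘V‖T×Q)`. -/
noncomputable def Frho {𝓧 𝓨 : Type*} [Fintype 𝓧] [Fintype 𝓨]
    (ρ : ℝ) (T : 𝓨 → ℝ) (V : 𝓨 → 𝓧 → ℝ) (Q : 𝓧 → ℝ) (P : 𝓧 → 𝓨 → ℝ) : EReal :=
  DQP T V Q P + (ρ : EReal) * DTQ T V Q

/-- the unconstrained penalized minimum
    `min_{T,V} { D(T∘V‖Q∘P) + ρ·(D(T∘V‖T×Q) − R) }`. -/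
noncomputable def penMin {𝓧 𝓨 : Type*} [Fintype 𝓧] [Fintype 𝓨]
    (Q : 𝓧 → ℝ) (P : 𝓧 → 𝓨 → ℝ) (R ρ : ℝ) : EReal :=
  sInf {v | ∃ T : 𝓨 → ℝ, ∃ V : 𝓨 → 𝓧 → ℝ, IsPMF T ∧ IsCondPMF V ∧
    v = DQP T V Q P + (ρ : EReal) * (DTQ T V Q - (R : EReal))}

/-- the support-constrained penalized minimum
    `min_{T,V : supp(V) ⊆ supp(Q)} { D(T∘V‖Q∘P) − ρ·(R − D(T∘V‖T×Q)) }`. -/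
noncomputable def penMinS {𝓧 𝓨 : Type*} [Fintype 𝓧] [Fintype 𝓨]
    (Q : 𝓧 → ℝ) (P : 𝓧 → 𝓨 → ℝ) (R ρ : ℝ) : EReal :=
  sInf {v | ∃ T : 𝓨 → ℝ, ∃ V : 𝓨 → 𝓧 → ℝ, IsPMF T ∧ IsCondPMF V ∧
    (∀ y x, Q x = 0 → V y x = 0) ∧
    v = DQP T V Q P - (ρ : EReal) * ((R : EReal) - DTQ T V Q)}

/-! Put `m(y) = max_{x ∈ supp Q} P(y|x)` and `S = ∑_y m(y)`. An input distribution `Q'` supported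
in `supp Q`, with output distribution `W`, satisfies `P(y|x) ≤ m(y)` on its support, so
`I(Q'∘P) ≤ ∑_y W(y) log(m(y)/W(y)) ≤ log S` by Gibbs' inequality. Hence
`C(supp Q) ≤ log S = −E₀(−1,Q)`. -/

open Finset

/-- Each term is bounded via `log t ≤ t - 1` at `t = m / (S w)`, where `S = ∑ m`. -/
theorem sum_mul_log_div_le_log_sum {ι : Type*} [Fintype ι] {w m : ι → ℝ}
    (hw : ∀ i, 0 ≤ w i) (hw_sum : ∑ i, w i = 1) (hm : ∀ i, 0 ≤ m i)
    (hwm : ∀ i, 0 < w i → 0 < m i) :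
    ∑ i, w i * Real.log (m i / w i) ≤ Real.log (∑ i, m i) := by
  set S := ∑ i, m i
  have hS : 0 < S := by
    obtain ⟨i, -, hi⟩ := (sum_pos_iff_of_nonneg fun i _ ↦ hw i).1 (hw_sum ▸ one_pos)
    exact (hwm i hi).trans_le (single_le_sum (fun j _ ↦ hm j) (mem_univ i))
  have hterm : ∀ i, w i * Real.log (m i / w i) ≤ w i * Real.log S + m i / S - w i := by
    intro i
    rcases (hw i).eq_or_lt with hwi | hwi
    · rw [← hwi]
      simpa using div_nonneg (hm i) hS.le
    have hmi := hwm i hwi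
    have hlog : Real.log (m i / w i) = Real.log S + Real.log (m i / (S * w i)) := by
      rw [← Real.log_mul hS.ne' (by positivity)]
      congr 1
      field_simp
    have := Real.log_le_sub_one_of_pos (show 0 < m i / (S * w i) by positivity)
    have hcancel : w i * (m i / (S * w i)) = m i / S := by field_simp
    rw [hlog]
    nlinarith
  calc ∑ i, w i * Real.log (m i / w i)
      ≤ ∑ i, (w i * Real.log S + m i / S - w i) := sum_le_sum fun i _ ↦ hterm i
    _ = Real.log S := by
      rw [sum_sub_distrib, sum_add_distrib, ← sum_mul, ← sum_div, hw_sum, div_self hS.ne']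
      ring

theorem le_maxP {𝓧 𝓨 : Type*} [Finite 𝓧] {Q : 𝓧 → ℝ} {P : 𝓧 → 𝓨 → ℝ} {x : 𝓧}
    (hx : 0 < Q x) (y : 𝓨) : P x y ≤ maxP Q P y :=
  le_ciSup (Set.finite_range fun z : {x // 0 < Q x} ↦ P z.1 y).bddAbove ⟨x, hx⟩

theorem MI_le_log_sum {𝓧 𝓨 : Type*} [Fintype 𝓧] [Fintype 𝓨] {P : 𝓧 → 𝓨 → ℝ}
    (hP : IsChannel P) {Q : 𝓧 → ℝ} (hQ : IsPMF Q) {M : 𝓨 → ℝ}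
    (hM : ∀ x y, 0 < Q x → P x y ≤ M y) :
    MI Q P ≤ Real.log (∑ y, M y) := by
  set W : 𝓨 → ℝ := fun y ↦ ∑ a, Q a * P a y
  have hQP : ∀ x y, 0 ≤ Q x * P x y := fun x y ↦ mul_nonneg (hQ.1 x) ((hP x).1 y)
  have hpos : ∀ x y, 0 < Q x * P x y → 0 < Q x ∧ 0 < P x y := fun x y h ↦
    ⟨(hQ.1 x).lt_of_ne' (left_ne_zero_of_mul h.ne'),
      ((hP x).1 y).lt_of_ne' (right_ne_zero_of_mul h.ne')⟩
  have hW_sum : ∑ y, W y = 1 := by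
    simp only [W]
    rw [sum_comm]
    simp only [← mul_sum, (hP _).2, mul_one, hQ.2]
  have hterm : ∀ x y, (if Q x * P x y = 0 then 0
      else Q x * P x y * Real.log (P x y / W y)) ≤ Q x * P x y * Real.log (M y / W y) := by
    intro x y
    split_ifs with h
    · simp [h]
    obtain ⟨hQx, hPxy⟩ := hpos x y ((hQP x y).lt_of_ne' h)
    have hWy : 0 < W y :=
      ((hQP x y).lt_of_ne' h).trans_le (single_le_sum (fun a _ ↦ hQP a y) (mem_univ x))
    gcongr
    exact hM x y hQx
  obtain ⟨x₀, -, hx₀⟩ := (sum_pos_iff_of_nonneg fun x _ ↦ hQ.1 x).1 (hQ.2 ▸ one_pos)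
  have hM_nonneg : ∀ y, 0 ≤ M y := fun y ↦ ((hP x₀).1 y).trans (hM x₀ y hx₀)
  have hWM : ∀ y, 0 < W y → 0 < M y := by
    intro y hy
    obtain ⟨x, -, hx⟩ := (sum_pos_iff_of_nonneg fun a _ ↦ hQP a y).1 hy
    obtain ⟨hQx, hPxy⟩ := hpos x y hx
    exact hPxy.trans_le (hM x y hQx)
  calc MI Q P ≤ ∑ x, ∑ y, Q x * P x y * Real.log (M y / W y) :=
        sum_le_sum fun x _ ↦ sum_le_sum fun y _ ↦ hterm x y
    _ = ∑ y, W y * Real.log (M y / W y) := by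
        rw [sum_comm]
        simp only [W, sum_mul]
    _ ≤ Real.log (∑ y, M y) :=
        sum_mul_log_div_le_log_sum (fun y ↦ sum_nonneg fun a _ ↦ hQP a y) hW_sum
          hM_nonneg hWM

theorem stmt_14_general {𝓧 𝓨 : Type*} [Fintype 𝓧] [Fintype 𝓨]
    (P : 𝓧 → 𝓨 → ℝ) (hP : IsChannel P) (Q : 𝓧 → ℝ) (hQ : IsPMF Q) :
    E0m1 Q P + capacity P {x | 0 < Q x} ≤ 0 := by
  have hcap : capacity P {x | 0 < Q x} ≤ Real.log (∑ y, maxP Q P y) := by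
    refine csSup_le ⟨_, Q, hQ, fun _ hx ↦ hx, rfl⟩ ?_
    rintro _ ⟨Q', hQ', hsupp, rfl⟩
    exact MI_le_log_sum hP hQ' fun x y hx ↦ le_maxP (hsupp x hx) y
  rw [E0m1]
  linarith

theorem stmt_14 {𝓧 𝓨 : Type*} [Fintype 𝓧] [Fintype 𝓨] [Nonempty 𝓧] [Nonempty 𝓨]
    (P : 𝓧 → 𝓨 → ℝ) (hP : IsChannel P) (Q : 𝓧 → ℝ) (hQ : IsPMF Q) :
    E0m1 Q P + capacity P {x | 0 < Q x} ≤ 0 :=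
  stmt_14_general P hP Q hQ
end

section
/- Fix ρ ∈ (−1,0) and a probability mass function Q₀ on 𝒳. Define recursively, for ℓ = 0, 1, 2, …: T_ℓ(y) = ( ∑_a Q_ℓ(a) P(y|a)^{1/(1+ρ)} )^{1+ρ} / ∑_{y'} ( ∑_a Q_ℓ(a) P(y'|a)^{1/(1+ρ)} )^{1+ρ}; V_ℓ(x|y) = Q_ℓ(x) P(y|x)^{1/(1+ρ)} / ∑_a Q_ℓ(a) P(y|a)^{1/(1+ρ)} for each y with T_ℓ(y) > 0; and Q_{ℓ+1}(x) = ∑_y T_ℓ(y) V_ℓ(x|y). Then for every ℓ: F_ρ(T_ℓ∘V_ℓ, Q_ℓ) ≥ F_ρ(T_ℓ∘V_ℓ, Q_{ℓ+1}) ≥ F_ρ(T_{ℓ+1}∘V_{ℓ+1}, Q_{ℓ+1}); in particular the sequence F_ρ(T_ℓ∘V_ℓ, Q_ℓ) is non-increasing. -/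
open scoped BigOperators
open Filter Topology

/-!
`F_ρ` is decreased alternately in `Q` and in `T∘V`. For fixed `T∘V`, replacing `Q` by the
`x`-marginal `Q'` of `T∘V` changes `F_ρ` by `-(1+ρ)·D(Q'‖Q) ≤ 0`. For fixed `Q`, Gibbs' inequality,
applied first to each `V(·|y)` and then to `T`, gives `F_ρ(T∘V, Q) ≥ E₀(ρ, Q)`, with equality at
the tilted pair `(T_ρ, V_ρ)`. Each time `supp(T∘V) ⊆ supp(Q∘P)`, so all divergences are finite
and `F_ρ` can be computed in `ℝ`.
-/

open Real Finset

lemma EReal.coe_finset_sum {ι : Type*} (s : Finset ι) (f : ι → ℝ) :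
    ((∑ i ∈ s, f i : ℝ) : EReal) = ∑ i ∈ s, (f i : EReal) := by
  induction s using Finset.cons_induction with
  | empty => simp
  | cons a s ha ih => rw [sum_cons, sum_cons, EReal.coe_add, ih]

lemma klTerm_eq_coe {s t : ℝ} (h : s ≠ 0 → t ≠ 0) :
    klTerm s t = ((s * log (s / t) : ℝ) : EReal) := by
  unfold klTerm
  split_ifs with hs ht
  · simp [hs]
  · exact absurd ht (h hs)
  · rfl

lemma sum_mul_congr_of_ne_zero {ι : Type*} (s : Finset ι) {w f g : ι → ℝ}
    (h : ∀ i, w i ≠ 0 → f i = g i) : ∑ i ∈ s, w i * f i = ∑ i ∈ s, w i * g i :=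
  sum_congr rfl fun i _ => by
    rcases eq_or_ne (w i) 0 with hw | hw
    · simp [hw]
    · rw [h i hw]

lemma IsPMF.exists_ne_zero {ι : Type*} [Fintype ι] {p : ι → ℝ} (hp : IsPMF p) :
    ∃ i, p i ≠ 0 := by
  obtain ⟨i, -, hi⟩ := exists_ne_zero_of_sum_ne_zero (hp.2 ▸ one_ne_zero : ∑ i, p i ≠ 0)
  exact ⟨i, hi⟩

/-- Gibbs' inequality, with an unnormalised second argument. -/
theorem neg_log_sum_le_sum_mul_log_div {ι : Type*} [Fintype ι] {p a : ι → ℝ} (hp : IsPMF p)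
    (ha : ∀ i, 0 ≤ a i) (hpa : ∀ i, p i ≠ 0 → a i ≠ 0) :
    -log (∑ i, a i) ≤ ∑ i, p i * log (p i / a i) := by
  obtain ⟨i₀, hi₀⟩ := hp.exists_ne_zero
  set A := ∑ i, a i
  have hA : 0 < A := ((ha i₀).lt_of_ne' (hpa i₀ hi₀)).trans_le
    (single_le_sum (fun i _ => ha i) (mem_univ i₀))
  have hterm : ∀ i, p i - a i / A ≤ p i * log (p i / a i) + p i * log A := by
    intro i
    rcases eq_or_ne (p i) 0 with hpi | hpi
    · simp [hpi, div_nonneg (ha i) hA.le]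
    have hpi' := (hp.1 i).lt_of_ne' hpi
    have hai := (ha i).lt_of_ne' (hpa i hpi)
    calc p i - a i / A = p i * (1 - (p i / a i * A)⁻¹) := by field_simp
      _ ≤ p i * log (p i / a i * A) :=
        mul_le_mul_of_nonneg_left (one_sub_inv_le_log_of_pos (by positivity)) hpi'.le
      _ = p i * log (p i / a i) + p i * log A := by
        rw [log_mul (by positivity) hA.ne', mul_add]
  have hsum := sum_le_sum fun i (_ : i ∈ univ) => hterm i
  rw [sum_sub_distrib, ← sum_div, div_self hA.ne', sum_add_distrib, ← sum_mul, hp.2] at hsum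
  linarith

section

variable {𝓧 𝓨 : Type*} {ρ : ℝ} {P : 𝓧 → 𝓨 → ℝ} {Q : 𝓧 → ℝ} {T : 𝓨 → ℝ} {V : 𝓨 → 𝓧 → ℝ}

noncomputable def marginal [Fintype 𝓨] (T : 𝓨 → ℝ) (V : 𝓨 → 𝓧 → ℝ) (x : 𝓧) : ℝ :=
  ∑ y, T y * V y x

lemma sum_sum_mul_eq_sum_marginal_mul [Fintype 𝓧] [Fintype 𝓨] (c : 𝓧 → ℝ) :
    ∑ y, ∑ x, T y * V y x * c x = ∑ x, marginal T V x * c x := by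
  simp only [marginal, sum_mul]
  exact sum_comm

lemma marginal_isPMF [Fintype 𝓧] [Fintype 𝓨] (hT : IsPMF T) (hV : IsCondPMF V) :
    IsPMF (marginal T V) := by
  refine ⟨fun x => sum_nonneg fun y _ => mul_nonneg (hT.1 y) ((hV y).1 x), ?_⟩
  calc ∑ x, marginal T V x = ∑ y, T y * ∑ x, V y x := by
        simp only [marginal, mul_sum]
        exact sum_comm
    _ = 1 := by simp [(hV _).2, hT.2]

lemma marginal_mul_ne_zero [Fintype 𝓨] (hT : ∀ y, 0 ≤ T y) (hV : ∀ y x, 0 ≤ V y x)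
    (hsupp : ∀ y x, T y * V y x ≠ 0 → Q x * P x y ≠ 0) :
    ∀ y x, T y * V y x ≠ 0 → marginal T V x * P x y ≠ 0 := by
  intro y x h
  have hle : T y * V y x ≤ marginal T V x :=
    single_le_sum (fun y' _ => mul_nonneg (hT y') (hV y' x)) (mem_univ y)
  exact mul_ne_zero ((mul_nonneg (hT y) (hV y x)).lt_of_ne' h |>.trans_le hle).ne'
    (right_ne_zero_of_mul (hsupp y x h))

/-- `F_ρ(T∘V, Q)` in `ℝ`: the integrand `log (TV/QP) + ρ log (V/Q)` with its logarithms split. -/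
noncomputable def frhoReal [Fintype 𝓧] [Fintype 𝓨] (ρ : ℝ) (T : 𝓨 → ℝ) (V : 𝓨 → 𝓧 → ℝ)
    (Q : 𝓧 → ℝ) (P : 𝓧 → 𝓨 → ℝ) : ℝ :=
  ∑ y, ∑ x, T y * V y x * (log (T y) + (1 + ρ) * log (V y x / Q x) - log (P x y))

lemma Frho_eq_coe_frhoReal [Fintype 𝓧] [Fintype 𝓨]
    (hsupp : ∀ y x, T y * V y x ≠ 0 → Q x * P x y ≠ 0) :
    Frho ρ T V Q P = frhoReal ρ T V Q P := by
  have hDQP : DQP T V Q P =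
      ((∑ y, ∑ x, T y * V y x * log (T y * V y x / (Q x * P x y)) : ℝ) : EReal) := by
    simp only [DQP, EReal.coe_finset_sum]
    exact sum_congr rfl fun y _ => sum_congr rfl fun x _ => klTerm_eq_coe (hsupp y x)
  have hDTQ : DTQ T V Q =
      ((∑ y, ∑ x, T y * V y x * log (T y * V y x / (T y * Q x)) : ℝ) : EReal) := by
    simp only [DTQ, EReal.coe_finset_sum]
    exact sum_congr rfl fun y _ => sum_congr rfl fun x _ => klTerm_eq_coe fun h =>
      mul_ne_zero (left_ne_zero_of_mul h) (left_ne_zero_of_mul (hsupp y x h))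
  rw [Frho, hDQP, hDTQ, ← EReal.coe_mul, ← EReal.coe_add, EReal.coe_eq_coe_iff, mul_sum,
    ← sum_add_distrib]
  refine sum_congr rfl fun y _ => ?_
  rw [mul_sum, ← sum_add_distrib]
  refine sum_congr rfl fun x _ => ?_
  rcases eq_or_ne (T y * V y x) 0 with h | h
  · simp [h]
  obtain ⟨hT, hV⟩ := mul_ne_zero_iff.mp h
  obtain ⟨hQ, hP⟩ := mul_ne_zero_iff.mp (hsupp y x h)
  rw [log_div h (mul_ne_zero hQ hP), log_div h (mul_ne_zero hT hQ), log_div hV hQ,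
    log_mul hT hV, log_mul hQ hP, log_mul hT hQ]
  ring

lemma frhoReal_eq_frhoReal_marginal_add [Fintype 𝓧] [Fintype 𝓨] (hT : ∀ y, 0 ≤ T y)
    (hV : ∀ y x, 0 ≤ V y x) (hsupp : ∀ y x, T y * V y x ≠ 0 → Q x * P x y ≠ 0) :
    frhoReal ρ T V Q P = frhoReal ρ T V (marginal T V) P
      + (1 + ρ) * ∑ x, marginal T V x * log (marginal T V x / Q x) := by
  set Q' := marginal T V
  have hQ' := marginal_mul_ne_zero hT hV hsupp
  calc frhoReal ρ T V Q P
      = ∑ y, ∑ x, T y * V y x * ((log (T y) + (1 + ρ) * log (V y x / Q' x) - log (P x y))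
          + (1 + ρ) * log (Q' x / Q x)) :=
        sum_congr rfl fun y _ => sum_mul_congr_of_ne_zero _ fun x h => by
          have hV := right_ne_zero_of_mul h
          have hQ := left_ne_zero_of_mul (hsupp y x h)
          have hQ' := left_ne_zero_of_mul (hQ' y x h)
          rw [log_div hV hQ, log_div hV hQ', log_div hQ' hQ]
          ring
    _ = frhoReal ρ T V Q' P + (1 + ρ) * ∑ y, ∑ x, T y * V y x * log (Q' x / Q x) := by
        simp only [frhoReal, mul_add, sum_add_distrib, mul_sum, mul_left_comm]
    _ = _ := by rw [sum_sum_mul_eq_sum_marginal_mul]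

lemma frhoReal_marginal_le [Fintype 𝓧] [Fintype 𝓨] (hρ : -1 ≤ ρ) (hT : IsPMF T)
    (hV : IsCondPMF V) (hQ : IsPMF Q) (hsupp : ∀ y x, T y * V y x ≠ 0 → Q x * P x y ≠ 0) :
    frhoReal ρ T V (marginal T V) P ≤ frhoReal ρ T V Q P := by
  have hQ'Q : ∀ x, marginal T V x ≠ 0 → Q x ≠ 0 := fun x h => by
    obtain ⟨y, -, hy⟩ := exists_ne_zero_of_sum_ne_zero h
    exact left_ne_zero_of_mul (hsupp y x hy)
  have hD : 0 ≤ ∑ x, marginal T V x * log (marginal T V x / Q x) := by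
    simpa [hQ.2] using neg_log_sum_le_sum_mul_log_div (marginal_isPMF hT hV) hQ.1 hQ'Q
  rw [frhoReal_eq_frhoReal_marginal_add hT.1 (fun y => (hV y).1) hsupp]
  nlinarith

lemma tilted_isPMF [Fintype 𝓧] [Fintype 𝓨] (hP : IsChannel P) (hQ : IsPMF Q)
    (hT : ∀ y, T y = (∑ a, Q a * P a y ^ (1 / (1 + ρ))) ^ (1 + ρ) /
      ∑ y', (∑ a, Q a * P a y' ^ (1 / (1 + ρ))) ^ (1 + ρ)) :
    IsPMF T := by
  set S := fun y => ∑ a, Q a * P a y ^ (1 / (1 + ρ))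
  have ha : ∀ y a, 0 ≤ Q a * P a y ^ (1 / (1 + ρ)) :=
    fun y a => mul_nonneg (hQ.1 a) (rpow_nonneg ((hP a).1 y) _)
  have hS : ∀ y, 0 ≤ S y := fun y => sum_nonneg fun a _ => ha y a
  obtain ⟨x, hx⟩ := hQ.exists_ne_zero
  obtain ⟨y, hy⟩ := (hP x).exists_ne_zero
  have hSy : 0 < S y :=
    (mul_pos ((hQ.1 x).lt_of_ne' hx) (rpow_pos_of_pos (((hP x).1 y).lt_of_ne' hy) _)).trans_le
      (single_le_sum (fun a _ => ha y a) (mem_univ x))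
  have hZ : 0 < ∑ y', S y' ^ (1 + ρ) := (rpow_pos_of_pos hSy _).trans_le
    (single_le_sum (fun y' _ => rpow_nonneg (hS y') _) (mem_univ y))
  refine ⟨fun y => (hT y).symm ▸ div_nonneg (rpow_nonneg (hS y) _) hZ.le, ?_⟩
  rw [sum_congr rfl fun y _ => hT y, ← sum_div, div_self hZ.ne']

lemma tilted_mul_ne_zero [Fintype 𝓧] (hρ : -1 < ρ) (hT : ∀ y, 0 ≤ T y)
    (hV : ∀ y, 0 < T y → ∀ x,
      V y x = Q x * P x y ^ (1 / (1 + ρ)) / ∑ a, Q a * P a y ^ (1 / (1 + ρ))) :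
    ∀ y x, T y * V y x ≠ 0 → Q x * P x y ≠ 0 := by
  intro y x h
  obtain ⟨hTy, hVy⟩ := mul_ne_zero_iff.mp h
  rw [hV y ((hT y).lt_of_ne' hTy) x] at hVy
  obtain ⟨hQx, hPx⟩ := mul_ne_zero_iff.mp (div_ne_zero_iff.mp hVy).1
  refine mul_ne_zero hQx fun hP0 => hPx ?_
  rw [hP0, zero_rpow (one_div_pos.mpr (neg_lt_iff_pos_add'.mp hρ)).ne']

lemma E0_le_frhoReal [Fintype 𝓧] [Fintype 𝓨] (hρ : -1 < ρ) (hP : ∀ x y, 0 ≤ P x y)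
    (hQ : ∀ x, 0 ≤ Q x) (hT : IsPMF T) (hV : IsCondPMF V)
    (hsupp : ∀ y x, T y * V y x ≠ 0 → Q x * P x y ≠ 0) :
    E0 ρ Q P ≤ frhoReal ρ T V Q P := by
  have hρ' : 0 < 1 + ρ := by linarith
  set β := 1 / (1 + ρ)
  have hβ : (1 + ρ) * β = 1 := mul_one_div_cancel hρ'.ne'
  set a := fun y x => Q x * P x y ^ β
  set S := fun y => ∑ x, a y x
  have ha : ∀ y x, 0 ≤ a y x := fun y x => mul_nonneg (hQ x) (rpow_nonneg (hP x y) β)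
  have ha' : ∀ y x, T y * V y x ≠ 0 → 0 < a y x := fun y x h => by
    obtain ⟨hQx, hPx⟩ := mul_ne_zero_iff.mp (hsupp y x h)
    exact mul_pos ((hQ x).lt_of_ne' hQx) (rpow_pos_of_pos ((hP x y).lt_of_ne' hPx) β)
  have hS : ∀ y, T y ≠ 0 → 0 < S y := fun y hTy => by
    obtain ⟨x, hx⟩ := (hV y).exists_ne_zero
    exact (ha' y x (mul_ne_zero hTy hx)).trans_le
      (single_le_sum (fun x _ => ha y x) (mem_univ x))
  have hinner : ∀ y, T y ≠ 0 → -log (S y) ≤ ∑ x, V y x * log (V y x / a y x) := fun y hTy =>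
    neg_log_sum_le_sum_mul_log_div (hV y) (ha y) fun x hx => (ha' y x (mul_ne_zero hTy hx)).ne'
  have hexpand : ∀ y, T y * (log (T y) + (1 + ρ) * ∑ x, V y x * log (V y x / a y x)) =
      ∑ x, T y * V y x * (log (T y) + (1 + ρ) * log (V y x / Q x) - log (P x y)) := fun y => by
    calc _ = ∑ x, T y * V y x * (log (T y) + (1 + ρ) * log (V y x / a y x)) := by
          have hlogT : T y * log (T y) = ∑ x, T y * V y x * log (T y) := by
            rw [← sum_mul, ← mul_sum, (hV y).2, mul_one]
          rw [mul_add, hlogT, mul_sum, mul_sum, ← sum_add_distrib]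
          exact sum_congr rfl fun x _ => by ring
      _ = _ := sum_mul_congr_of_ne_zero _ fun x h => by
          have hVx := right_ne_zero_of_mul h
          obtain ⟨hQx, hPx⟩ := mul_ne_zero_iff.mp (hsupp y x h)
          have hPx' := (hP x y).lt_of_ne' hPx
          rw [log_div hVx (ha' y x h).ne', log_mul hQx (rpow_pos_of_pos hPx' β).ne',
            log_rpow hPx', log_div hVx hQx]
          linear_combination (-log (P x y)) * hβ
  calc E0 ρ Q P = -log (∑ y, S y ^ (1 + ρ)) := rfl
    _ ≤ ∑ y, T y * log (T y / S y ^ (1 + ρ)) :=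
      neg_log_sum_le_sum_mul_log_div hT (fun y => rpow_nonneg (sum_nonneg fun x _ => ha y x) _)
        fun y hTy => (rpow_pos_of_pos (hS y hTy) _).ne'
    _ ≤ ∑ y, T y * (log (T y) + (1 + ρ) * ∑ x, V y x * log (V y x / a y x)) :=
      sum_le_sum fun y _ => by
        rcases eq_or_ne (T y) 0 with hTy | hTy
        · simp [hTy]
        rw [log_div hTy (rpow_pos_of_pos (hS y hTy) _).ne', log_rpow (hS y hTy)]
        have := mul_le_mul_of_nonneg_left (hinner y hTy) hρ'.le
        exact mul_le_mul_of_nonneg_left (by linarith) (hT.1 y)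
    _ = frhoReal ρ T V Q P := sum_congr rfl fun y _ => hexpand y

lemma frhoReal_tilted_eq_E0 [Fintype 𝓧] [Fintype 𝓨] (hρ : -1 < ρ) (hP : ∀ x y, 0 ≤ P x y)
    (hQ : ∀ x, 0 ≤ Q x) (hT : IsPMF T) (hV : IsCondPMF V)
    (hTdef : ∀ y, T y = (∑ a, Q a * P a y ^ (1 / (1 + ρ))) ^ (1 + ρ) /
      ∑ y', (∑ a, Q a * P a y' ^ (1 / (1 + ρ))) ^ (1 + ρ))
    (hVdef : ∀ y, 0 < T y → ∀ x,
      V y x = Q x * P x y ^ (1 / (1 + ρ)) / ∑ a, Q a * P a y ^ (1 / (1 + ρ))) :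
    frhoReal ρ T V Q P = E0 ρ Q P := by
  have hρ' : 0 < 1 + ρ := by linarith
  set β := 1 / (1 + ρ)
  have hβ : (1 + ρ) * β = 1 := mul_one_div_cancel hρ'.ne'
  set Z := ∑ y, (∑ a, Q a * P a y ^ β) ^ (1 + ρ)
  have hterm : ∀ y x, T y * V y x ≠ 0 →
      log (T y) + (1 + ρ) * log (V y x / Q x) - log (P x y) = -log Z := fun y x h => by
    obtain ⟨hTy, hVx⟩ := mul_ne_zero_iff.mp h
    rw [hVdef y ((hT.1 y).lt_of_ne' hTy) x] at hVx ⊢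
    obtain ⟨hQPx, hSy⟩ := div_ne_zero_iff.mp hVx
    obtain ⟨hQx, hPβ⟩ := mul_ne_zero_iff.mp hQPx
    have hSy' : 0 < ∑ a, Q a * P a y ^ β :=
      (sum_nonneg fun a _ => mul_nonneg (hQ a) (rpow_nonneg (hP a y) β)).lt_of_ne' hSy
    have hPx : 0 < P x y :=
      (hP x y).lt_of_ne' fun h0 => hPβ (by rw [h0, zero_rpow (by positivity)])
    rw [hTdef y] at hTy ⊢
    obtain ⟨hSρ, hZ⟩ := div_ne_zero_iff.mp hTy
    rw [log_div hSρ hZ, log_rpow hSy', log_div hVx hQx, log_div hQPx hSy, log_mul hQx hPβ,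
      log_rpow hPx]
    linear_combination log (P x y) * hβ
  calc frhoReal ρ T V Q P = ∑ y, ∑ x, T y * V y x * (-log Z) :=
        sum_congr rfl fun y _ => sum_mul_congr_of_ne_zero _ (hterm y)
    _ = -log Z := by
        rw [sum_sum_mul_eq_sum_marginal_mul, ← sum_mul, (marginal_isPMF hT hV).2, one_mul]
    _ = E0 ρ Q P := rfl

end

theorem stmt_18_general {𝓧 𝓨 : Type*} [Fintype 𝓧] [Fintype 𝓨]
    (P : 𝓧 → 𝓨 → ℝ) (hP : IsChannel P)
    (ρ : ℝ) (hρ : ρ ∈ Set.Ioo (-1 : ℝ) 0)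
    (Qs : ℕ → 𝓧 → ℝ) (Ts : ℕ → 𝓨 → ℝ) (Vs : ℕ → 𝓨 → 𝓧 → ℝ)
    (hQ0 : IsPMF (Qs 0))
    (hVpmf : ∀ ℓ, IsCondPMF (Vs ℓ))
    (hT : ∀ ℓ y, Ts ℓ y
      = (∑ a, Qs ℓ a * P a y ^ (1 / (1 + ρ))) ^ (1 + ρ) /
          ∑ y', (∑ a, Qs ℓ a * P a y' ^ (1 / (1 + ρ))) ^ (1 + ρ))
    (hV : ∀ ℓ y, 0 < Ts ℓ y → ∀ x,
      Vs ℓ y x = Qs ℓ x * P x y ^ (1 / (1 + ρ)) / ∑ a, Qs ℓ a * P a y ^ (1 / (1 + ρ)))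
    (hrec : ∀ ℓ x, Qs (ℓ + 1) x = ∑ y, Ts ℓ y * Vs ℓ y x) :
    (∀ ℓ, Frho ρ (Ts ℓ) (Vs ℓ) (Qs (ℓ + 1)) P ≤ Frho ρ (Ts ℓ) (Vs ℓ) (Qs ℓ) P
      ∧ Frho ρ (Ts (ℓ + 1)) (Vs (ℓ + 1)) (Qs (ℓ + 1)) P
          ≤ Frho ρ (Ts ℓ) (Vs ℓ) (Qs (ℓ + 1)) P)
    ∧ Antitone (fun ℓ => Frho ρ (Ts ℓ) (Vs ℓ) (Qs ℓ) P) := by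
  have hQs : ∀ ℓ, Qs (ℓ + 1) = marginal (Ts ℓ) (Vs ℓ) := fun ℓ => funext (hrec ℓ)
  have hQpmf : ∀ ℓ, IsPMF (Qs ℓ) := by
    intro ℓ
    induction ℓ with
    | zero => exact hQ0
    | succ ℓ ih => exact hQs ℓ ▸ marginal_isPMF (tilted_isPMF hP ih (hT ℓ)) (hVpmf ℓ)
  have hTpmf : ∀ ℓ, IsPMF (Ts ℓ) := fun ℓ => tilted_isPMF hP (hQpmf ℓ) (hT ℓ)
  have hsupp : ∀ ℓ y x, Ts ℓ y * Vs ℓ y x ≠ 0 → Qs ℓ x * P x y ≠ 0 :=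
    fun ℓ => tilted_mul_ne_zero hρ.1 (hTpmf ℓ).1 (hV ℓ)
  have hsupp' : ∀ ℓ y x, Ts ℓ y * Vs ℓ y x ≠ 0 → Qs (ℓ + 1) x * P x y ≠ 0 := fun ℓ =>
    hQs ℓ ▸ marginal_mul_ne_zero (hTpmf ℓ).1 (fun y => (hVpmf ℓ y).1) (hsupp ℓ)
  have hstep : ∀ ℓ, Frho ρ (Ts ℓ) (Vs ℓ) (Qs (ℓ + 1)) P ≤ Frho ρ (Ts ℓ) (Vs ℓ) (Qs ℓ) P
      ∧ Frho ρ (Ts (ℓ + 1)) (Vs (ℓ + 1)) (Qs (ℓ + 1)) P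
          ≤ Frho ρ (Ts ℓ) (Vs ℓ) (Qs (ℓ + 1)) P := fun ℓ => by
    rw [Frho_eq_coe_frhoReal (hsupp ℓ), Frho_eq_coe_frhoReal (hsupp' ℓ),
      Frho_eq_coe_frhoReal (hsupp (ℓ + 1)), EReal.coe_le_coe_iff, EReal.coe_le_coe_iff,
      frhoReal_tilted_eq_E0 hρ.1 (fun x => (hP x).1) (hQpmf (ℓ + 1)).1 (hTpmf (ℓ + 1))
        (hVpmf (ℓ + 1)) (hT (ℓ + 1)) (hV (ℓ + 1))]
    exact ⟨hQs ℓ ▸ frhoReal_marginal_le hρ.1.le (hTpmf ℓ) (hVpmf ℓ) (hQpmf ℓ) (hsupp ℓ),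
      E0_le_frhoReal hρ.1 (fun x => (hP x).1) (hQpmf (ℓ + 1)).1 (hTpmf ℓ) (hVpmf ℓ) (hsupp' ℓ)⟩
  exact ⟨hstep, antitone_nat_of_succ_le fun ℓ => (hstep ℓ).2.trans (hstep ℓ).1⟩

theorem stmt_18 {𝓧 𝓨 : Type*} [Fintype 𝓧] [Fintype 𝓨] [Nonempty 𝓧] [Nonempty 𝓨]
    (P : 𝓧 → 𝓨 → ℝ) (hP : IsChannel P)
    (ρ : ℝ) (hρ : ρ ∈ Set.Ioo (-1 : ℝ) 0)
    (Qs : ℕ → 𝓧 → ℝ) (Ts : ℕ → 𝓨 → ℝ) (Vs : ℕ → 𝓨 → 𝓧 → ℝ)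
    (hQ0 : IsPMF (Qs 0))
    (hVpmf : ∀ ℓ, IsCondPMF (Vs ℓ))
    (hT : ∀ ℓ y, Ts ℓ y
      = (∑ a, Qs ℓ a * P a y ^ (1 / (1 + ρ))) ^ (1 + ρ) /
          ∑ y', (∑ a, Qs ℓ a * P a y' ^ (1 / (1 + ρ))) ^ (1 + ρ))
    (hV : ∀ ℓ y, 0 < Ts ℓ y → ∀ x,
      Vs ℓ y x = Qs ℓ x * P x y ^ (1 / (1 + ρ)) / ∑ a, Qs ℓ a * P a y ^ (1 / (1 + ρ)))
    (hrec : ∀ ℓ x, Qs (ℓ + 1) x = ∑ y, Ts ℓ y * Vs ℓ y x) :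
    (∀ ℓ, Frho ρ (Ts ℓ) (Vs ℓ) (Qs (ℓ + 1)) P ≤ Frho ρ (Ts ℓ) (Vs ℓ) (Qs ℓ) P
      ∧ Frho ρ (Ts (ℓ + 1)) (Vs (ℓ + 1)) (Qs (ℓ + 1)) P
          ≤ Frho ρ (Ts ℓ) (Vs ℓ) (Qs (ℓ + 1)) P)
    ∧ Antitone (fun ℓ => Frho ρ (Ts ℓ) (Vs ℓ) (Qs ℓ) P) :=
  stmt_18_general P hP ρ hρ Qs Ts Vs hQ0 hVpmf hT hV hrec
end
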